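/- Let p > 2 be a prime. The sequence {S_{F_p}(R_2(n))}_{n≥2} of exponential sums over F_p of the quadratic rotation polynomials R_2(n) = X_1X_2 + X_2X_3 + ⋯ + X_{n−1}X_n + X_nX_1 satisfies the homogeneous linear recurrence with characteristic polynomial X^4 − p^2; that is, S_{F_p}(R_2(n)) = p^2 · S_{F_p}(R_2(n−4)) for all n ≥ 6. -/

import Mathlib

open Finset

/-- The exponential sum over `F_p` of a function `G : F_pⁿ → F_p`:
`S_{F_p}(G) = ∑_{x ∈ F_pⁿ} e^{(2πi/p)·G(x)}`. -/
noncomputable def expSumP (p : ℕ) [NeZero p] (n : ℕ) (G : (Fin n → ZMod p) → ZMod p) : ℂ :=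
  ∑ x : Fin n → ZMod p, Complex.exp (2 * Real.pi * Complex.I * ((G x).val : ℂ) / p)

/-- Extension of a vector `x ∈ F_pⁿ` to a function on `ℕ` (index `i` corresponds
to the variable `X_{i+1}`; out-of-range indices give `0`). -/
def extVar {F : Type} [Zero F] {n : ℕ} (x : Fin n → F) : ℕ → F :=
  fun i => if h : i < n then x ⟨i, h⟩ else 0

/-- The quadratic rotation polynomial `R₂(n) = X₁X₂ + X₂X₃ + ⋯ + X_{n−1}Xₙ + XₙX₁`. -/
def R2 (p n : ℕ) (x : Fin n → ZMod p) : ZMod p :=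
  ∑ i ∈ Finset.range n, extVar x i * extVar x ((i + 1) % n)

noncomputable def zet (p : ℕ) : ℂ := Complex.exp (2 * Real.pi * Complex.I / p)

lemma zet_pow_p (p : ℕ) [NeZero p] : zet p ^ p = 1 := by
  have hp0 : (p : ℂ) ≠ 0 := Nat.cast_ne_zero.2 (NeZero.ne p)
  rw [zet, ← Complex.exp_nat_mul,
    show (p : ℂ) * (2 * Real.pi * Complex.I / p) = 2 * Real.pi * Complex.I by
      field_simp]
  exact Complex.exp_two_pi_mul_I

lemma zet_ne_one (p : ℕ) (hp : 1 < p) : zet p ≠ 1 := by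
  rw [zet]
  intro h
  rw [Complex.exp_eq_one_iff] at h
  obtain ⟨m, hm⟩ := h
  have hp0 : (p : ℂ) ≠ 0 := Nat.cast_ne_zero.2 (by omega)
  have h2 : (2 * (Real.pi : ℂ) * Complex.I) ≠ 0 := by
    simp [Real.pi_ne_zero, Complex.I_ne_zero]
  have hm' : 2 * (Real.pi : ℂ) * Complex.I * 1 =
      2 * (Real.pi : ℂ) * Complex.I * ((m : ℂ) * (p : ℂ)) := by
    field_simp at hm
    linear_combination (2 * (Real.pi : ℂ) * Complex.I) * hm
  have h1 : (1 : ℂ) = (m : ℂ) * (p : ℂ) := mul_left_cancel₀ h2 hm'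
  have h1' : (1 : ℤ) = m * p := by exact_mod_cast h1
  have hdvd : (p : ℤ) ∣ 1 := ⟨m, by linarith [h1']⟩
  have := Int.le_of_dvd one_pos hdvd
  omega

noncomputable def ec (p : ℕ) [NeZero p] (a : ZMod p) : ℂ := zet p ^ a.val

lemma zet_pow_mod (p : ℕ) [NeZero p] (m : ℕ) : zet p ^ (m % p) = zet p ^ m := by
  conv_rhs => rw [← Nat.mod_add_div m p]
  rw [pow_add, pow_mul, zet_pow_p, one_pow, mul_one]

lemma ec_add (p : ℕ) [NeZero p] (a b : ZMod p) : ec p (a + b) = ec p a * ec p b := by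
  rw [ec, ec, ec, ZMod.val_add, zet_pow_mod, pow_add]

lemma ec_zero (p : ℕ) [NeZero p] : ec p 0 = 1 := by
  simp [ec, ZMod.val_zero]

lemma ec_sub_add (p : ℕ) [NeZero p] (u v : ZMod p) : ec p (u - v) * ec p v = ec p u := by
  rw [← ec_add, sub_add_cancel]

lemma ec_sum_zero (p : ℕ) [NeZero p] (hp : 1 < p) : ∑ c : ZMod p, ec p c = 0 := by
  have : ∑ c : ZMod p, ec p c = ∑ i ∈ Finset.range p, zet p ^ i := by
    refine Finset.sum_nbij' (fun c => c.val) (fun i => (i : ZMod p)) ?_ ?_ ?_ ?_ ?_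
    · intro c _; exact Finset.mem_range.2 (ZMod.val_lt c)
    · intro i _; exact Finset.mem_univ _
    · intro c _; exact ZMod.natCast_rightInverse c
    · intro i hi; exact ZMod.val_cast_of_lt (Finset.mem_range.1 hi)
    · intro c _; rfl
  rw [this, geom_sum_eq (zet_ne_one p hp) p, zet_pow_p]
  simp

lemma ec_orth (p : ℕ) [NeZero p] (hp : p.Prime) (a : ZMod p) :
    ∑ c : ZMod p, ec p (c * a) = if a = 0 then (p : ℂ) else 0 := by
  haveI : Fact p.Prime := ⟨hp⟩
  split_ifs with h
  · subst h
    simp only [mul_zero, ec_zero]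
    simp [ZMod.card]
  · have hbij : Function.Bijective (fun c : ZMod p => c * a) :=
      (Finite.injective_iff_bijective).1 (fun x y hxy => by
        exact mul_right_cancel₀ h hxy)
    calc ∑ c : ZMod p, ec p (c * a) = ∑ c : ZMod p, ec p c :=
          Fintype.sum_bijective _ hbij _ _ (fun c => rfl)
      _ = 0 := ec_sum_zero p hp.one_lt

lemma key4 (p : ℕ) [NeZero p] (hp : p.Prime) (a b : ZMod p) :
    ∑ y1 : ZMod p, ∑ y2 : ZMod p, ∑ y3 : ZMod p, ∑ y4 : ZMod p,
      ec p (a * y1 + y1 * y2 + y2 * y3 + y3 * y4 + y4 * b)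
    = (p : ℂ) ^ 2 * ec p (a * b) := by
  have step1 : ∀ y1 y2 y3 : ZMod p,
      ∑ y4 : ZMod p, ec p (a * y1 + y1 * y2 + y2 * y3 + y3 * y4 + y4 * b)
      = ec p (a * y1 + y1 * y2 + y2 * y3) * (if y3 = -b then (p : ℂ) else 0) := by
    intro y1 y2 y3
    have : ∀ y4 : ZMod p, a * y1 + y1 * y2 + y2 * y3 + y3 * y4 + y4 * b
        = (a * y1 + y1 * y2 + y2 * y3) + y4 * (y3 + b) := by intro y4; ring
    simp only [this, ec_add, ← Finset.mul_sum, ec_orth p hp]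
    congr 1
    simp [add_eq_zero_iff_eq_neg]
  have step2 : ∀ y1 y2 : ZMod p,
      ∑ y3 : ZMod p, ec p (a * y1 + y1 * y2 + y2 * y3) * (if y3 = -b then (p : ℂ) else 0)
      = ec p (a * y1) * ec p (y2 * (y1 - b)) * (p : ℂ) := by
    intro y1 y2
    rw [Finset.sum_eq_single (-b)]
    · rw [if_pos rfl]
      congr 1
      rw [← ec_add]
      congr 1
      ring
    · intro c _ hc; rw [if_neg hc, mul_zero]
    · intro h; exact absurd (Finset.mem_univ _) h
  have step3 : ∀ y1 : ZMod p,
      ∑ y2 : ZMod p, ec p (a * y1) * ec p (y2 * (y1 - b)) * (p : ℂ)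
      = ec p (a * y1) * (if y1 = b then (p : ℂ) else 0) * (p : ℂ) := by
    intro y1
    simp only [← Finset.sum_mul, ← Finset.mul_sum, ec_orth p hp, sub_eq_zero]
  calc ∑ y1 : ZMod p, ∑ y2 : ZMod p, ∑ y3 : ZMod p, ∑ y4 : ZMod p,
        ec p (a * y1 + y1 * y2 + y2 * y3 + y3 * y4 + y4 * b)
      = ∑ y1 : ZMod p, ec p (a * y1) * (if y1 = b then (p : ℂ) else 0) * (p : ℂ) := by
        refine Finset.sum_congr rfl fun y1 _ => ?_
        rw [← step3]
        refine Finset.sum_congr rfl fun y2 _ => ?_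
        rw [← step2]
        refine Finset.sum_congr rfl fun y3 _ => ?_
        exact step1 y1 y2 y3
    _ = (p : ℂ) ^ 2 * ec p (a * b) := by
        rw [Finset.sum_eq_single b]
        · rw [if_pos rfl]; ring
        · intro c _ hc; rw [if_neg hc]; ring
        · intro h; exact absurd (Finset.mem_univ _) h

lemma expSumP_eq (p : ℕ) [NeZero p] (n : ℕ) (G : (Fin n → ZMod p) → ZMod p) :
    expSumP p n G = ∑ x : Fin n → ZMod p, ec p (G x) := by
  refine Finset.sum_congr rfl fun x _ => ?_
  rw [ec, zet, ← Complex.exp_nat_mul]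
  congr 1
  ring

def Lsum (p : ℕ) (n : ℕ) (w : ℕ → ZMod p) : ZMod p :=
  ∑ i ∈ Finset.range n, w i * w (i + 1)

lemma Lsum_succ' (p : ℕ) (n : ℕ) (w : ℕ → ZMod p) :
    Lsum p (n + 1) w = w 0 * w 1 + Lsum p n (fun i => w (i + 1)) := by
  rw [Lsum, Finset.sum_range_succ', Lsum, add_comm]

lemma extVar_cons_zero {F : Type} [Zero F] {n : ℕ} (y : F) (x : Fin n → F) :
    extVar (Fin.cons y x) 0 = y := by
  rw [extVar, dif_pos (Nat.succ_pos n)]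
  rfl

lemma extVar_cons_succ {F : Type} [Zero F] {n : ℕ} (y : F) (x : Fin n → F) (i : ℕ) :
    extVar (Fin.cons y x) (i + 1) = extVar x i := by
  unfold extVar
  by_cases h : i < n
  · rw [dif_pos (by omega : i + 1 < n + 1), dif_pos h]
    rfl
  · rw [dif_neg (by omega), dif_neg h]

lemma R2_eq (p : ℕ) (n : ℕ) (x : Fin (n + 1) → ZMod p) :
    R2 p (n + 1) x = extVar x n * extVar x 0 + Lsum p n (extVar x) := by
  rw [R2, Finset.sum_range_succ, Nat.mod_self, add_comm]
  congr 1
  refine Finset.sum_congr rfl fun i hi => ?_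
  have := Finset.mem_range.1 hi
  rw [Nat.mod_eq_of_lt (by omega : i + 1 < n + 1)]

lemma Lsum_cons (p : ℕ) (n m : ℕ) (y : ZMod p) (x : Fin m → ZMod p) :
    Lsum p (n + 1) (extVar (Fin.cons y x)) = y * extVar x 0 + Lsum p n (extVar x) := by
  rw [Lsum_succ']
  have h0 : extVar (Fin.cons y x) 0 = y := extVar_cons_zero y x
  have h1 : extVar (Fin.cons y x) 1 = extVar x 0 := extVar_cons_succ y x 0
  have h2 : (fun i => extVar (Fin.cons y x) (i + 1)) = extVar x :=
    funext (extVar_cons_succ y x)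
  rw [h0, h1, h2]

lemma R2_cons (p : ℕ) (k : ℕ) (y1 y2 y3 y4 : ZMod p) (x : Fin (k + 2) → ZMod p) :
    R2 p (k + 6) (Fin.cons y1 (Fin.cons y2 (Fin.cons y3 (Fin.cons y4 x)))) =
      (R2 p (k + 2) x - extVar x (k + 1) * extVar x 0) +
        (extVar x (k + 1) * y1 + y1 * y2 + y2 * y3 + y3 * y4 + y4 * extVar x 0) := by
  have hz0 : extVar (Fin.cons y1 (Fin.cons y2 (Fin.cons y3 (Fin.cons y4 x)))) 0 = y1 :=
    extVar_cons_zero _ _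
  have hzt : extVar (Fin.cons y1 (Fin.cons y2 (Fin.cons y3 (Fin.cons y4 x)))) (k + 5)
      = extVar x (k + 1) := by
    calc extVar (Fin.cons y1 (Fin.cons y2 (Fin.cons y3 (Fin.cons y4 x)))) (k + 5)
        = extVar (Fin.cons y2 (Fin.cons y3 (Fin.cons y4 x))) (k + 4) :=
          extVar_cons_succ _ _ (k + 4)
      _ = extVar (Fin.cons y3 (Fin.cons y4 x)) (k + 3) := extVar_cons_succ _ _ (k + 3)
      _ = extVar (Fin.cons y4 x) (k + 2) := extVar_cons_succ _ _ (k + 2)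
      _ = extVar x (k + 1) := extVar_cons_succ _ _ (k + 1)
  have hL : Lsum p (k + 5) (extVar (Fin.cons y1 (Fin.cons y2 (Fin.cons y3 (Fin.cons y4 x)))))
      = y1 * y2 + (y2 * y3 + (y3 * y4 + (y4 * extVar x 0 + Lsum p (k + 1) (extVar x)))) := by
    rw [Lsum_cons p (k + 4) _ y1, Lsum_cons p (k + 3) _ y2, Lsum_cons p (k + 2) _ y3,
      Lsum_cons p (k + 1) _ y4, extVar_cons_zero, extVar_cons_zero, extVar_cons_zero]
  have hmain : R2 p (k + 6) (Fin.cons y1 (Fin.cons y2 (Fin.cons y3 (Fin.cons y4 x))))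
      = extVar (Fin.cons y1 (Fin.cons y2 (Fin.cons y3 (Fin.cons y4 x)))) (k + 5)
          * extVar (Fin.cons y1 (Fin.cons y2 (Fin.cons y3 (Fin.cons y4 x)))) 0
        + Lsum p (k + 5) (extVar (Fin.cons y1 (Fin.cons y2 (Fin.cons y3 (Fin.cons y4 x))))) :=
    R2_eq p (k + 5) _
  have hsmall : R2 p (k + 2) x
      = extVar x (k + 1) * extVar x 0 + Lsum p (k + 1) (extVar x) := R2_eq p (k + 1) x
  rw [hmain, hz0, hzt, hL, hsmall]
  ring

lemma sum_cons (p : ℕ) [NeZero p] (n : ℕ) (f : (Fin (n + 1) → ZMod p) → ℂ) :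
    ∑ z : Fin (n + 1) → ZMod p, f z
      = ∑ y : ZMod p, ∑ x : Fin n → ZMod p, f (Fin.cons y x) := by
  calc ∑ z : Fin (n + 1) → ZMod p, f z
      = ∑ yx : ZMod p × (Fin n → ZMod p), f (Fin.cons yx.1 yx.2) :=
        (Fintype.sum_equiv (Fin.consEquiv fun _ => ZMod p) _ _ fun yx => rfl).symm
    _ = ∑ y : ZMod p, ∑ x : Fin n → ZMod p, f (Fin.cons y x) := Fintype.sum_prod_type _

/-- Let `p > 2` be prime.  The sequence `{S_{F_p}(R₂(n))}` satisfies the homogeneous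
linear recurrence with characteristic polynomial `X⁴ − p²`, i.e.
`S_{F_p}(R₂(n)) = p² · S_{F_p}(R₂(n−4))` for all `n ≥ 6`. -/
theorem R2_expSum_linear_recurrence (p : ℕ) [NeZero p] (hp : p.Prime) (hp2 : 2 < p)
    (n : ℕ) (hn : 6 ≤ n) :
    expSumP p n (R2 p n) = (p : ℂ) ^ 2 * expSumP p (n - 4) (R2 p (n - 4)) := by
  obtain ⟨k, rfl⟩ : ∃ k, n = k + 6 := ⟨n - 6, by omega⟩
  have h4 : k + 6 - 4 = k + 2 := by omega
  rw [h4, expSumP_eq, expSumP_eq]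
  calc ∑ z : Fin (k + 6) → ZMod p, ec p (R2 p (k + 6) z)
      = ∑ y1 : ZMod p, ∑ y2 : ZMod p, ∑ y3 : ZMod p, ∑ y4 : ZMod p,
          ∑ x : Fin (k + 2) → ZMod p,
            ec p (R2 p (k + 6) (Fin.cons y1 (Fin.cons y2 (Fin.cons y3 (Fin.cons y4 x))))) := by
        rw [sum_cons p (k + 5)]
        refine Finset.sum_congr rfl fun y1 _ => ?_
        rw [sum_cons p (k + 4)]
        refine Finset.sum_congr rfl fun y2 _ => ?_
        rw [sum_cons p (k + 3)]
        refine Finset.sum_congr rfl fun y3 _ => ?_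
        rw [sum_cons p (k + 2)]
    _ = ∑ y1 : ZMod p, ∑ y2 : ZMod p, ∑ y3 : ZMod p, ∑ x : Fin (k + 2) → ZMod p,
          ∑ y4 : ZMod p,
            ec p (R2 p (k + 6) (Fin.cons y1 (Fin.cons y2 (Fin.cons y3 (Fin.cons y4 x))))) :=
        Finset.sum_congr rfl fun y1 _ => Finset.sum_congr rfl fun y2 _ =>
          Finset.sum_congr rfl fun y3 _ => Finset.sum_comm
    _ = ∑ y1 : ZMod p, ∑ y2 : ZMod p, ∑ x : Fin (k + 2) → ZMod p, ∑ y3 : ZMod p,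
          ∑ y4 : ZMod p,
            ec p (R2 p (k + 6) (Fin.cons y1 (Fin.cons y2 (Fin.cons y3 (Fin.cons y4 x))))) :=
        Finset.sum_congr rfl fun y1 _ => Finset.sum_congr rfl fun y2 _ => Finset.sum_comm
    _ = ∑ y1 : ZMod p, ∑ x : Fin (k + 2) → ZMod p, ∑ y2 : ZMod p, ∑ y3 : ZMod p,
          ∑ y4 : ZMod p,
            ec p (R2 p (k + 6) (Fin.cons y1 (Fin.cons y2 (Fin.cons y3 (Fin.cons y4 x))))) :=
        Finset.sum_congr rfl fun y1 _ => Finset.sum_comm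
    _ = ∑ x : Fin (k + 2) → ZMod p, ∑ y1 : ZMod p, ∑ y2 : ZMod p, ∑ y3 : ZMod p,
          ∑ y4 : ZMod p,
            ec p (R2 p (k + 6) (Fin.cons y1 (Fin.cons y2 (Fin.cons y3 (Fin.cons y4 x))))) :=
        Finset.sum_comm
    _ = ∑ x : Fin (k + 2) → ZMod p, (p : ℂ) ^ 2 * ec p (R2 p (k + 2) x) := by
        refine Finset.sum_congr rfl fun x _ => ?_
        simp only [R2_cons p k,
          ec_add p (R2 p (k + 2) x - extVar x (k + 1) * extVar x 0), ← Finset.mul_sum]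
        rw [key4 p hp (extVar x (k + 1)) (extVar x 0)]
        have : R2 p (k + 2) x - extVar x (k + 1) * extVar x 0
            + extVar x (k + 1) * extVar x 0 = R2 p (k + 2) x := by ring
        calc ec p (R2 p (k + 2) x - extVar x (k + 1) * extVar x 0)
              * ((p : ℂ) ^ 2 * ec p (extVar x (k + 1) * extVar x 0))
            = (p : ℂ) ^ 2 * (ec p (R2 p (k + 2) x - extVar x (k + 1) * extVar x 0)
                * ec p (extVar x (k + 1) * extVar x 0)) := by ring
          _ = (p : ℂ) ^ 2 * ec p (R2 p (k + 2) x) := by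
              rw [← ec_add, this]
    _ = (p : ℂ) ^ 2 * ∑ x : Fin (k + 2) → ZMod p, ec p (R2 p (k + 2) x) := by
        rw [Finset.mul_sum]
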